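/- Let X₁,…,Xₙ be Polish spaces with Borel probability measures μ₁,…,μₙ and let B ⊆ X₁ × ⋯ × Xₙ be a Borel set. Suppose that for every ε > 0 there exist Borel sets Bᵢ ⊆ Xᵢ with ∑ᵢ μᵢ(Bᵢ) ≤ ε and B ⊆ ⋃ᵢ p_{Xᵢ}⁻¹[Bᵢ]. Then B is an L-shaped null set: there exist Borel μᵢ-null sets Nᵢ ⊆ Xᵢ with B ⊆ ⋃ᵢ p_{Xᵢ}⁻¹[Nᵢ]. -/

import Mathlib

/-!
Borel–Cantelli. Take covers `Bᵏ` with `∑ᵢ μᵢ(Bᵏᵢ) ≤ 2⁻ᵏ` and let `Nᵢ = limsup_k Bᵏᵢ`. Each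
`∑ₖ μᵢ(Bᵏᵢ)` is finite, so `μᵢ(Nᵢ) = 0`. A point `x ∈ B` has, for every `k`, a coordinate `i`
with `xᵢ ∈ Bᵏᵢ`; as there are only finitely many coordinates, one of them works for infinitely
many `k`, i.e. `xᵢ ∈ Nᵢ`.
-/

open MeasureTheory Set Filter
open scoped ENNReal

theorem measure_limsup_eq_zero_of_le_pow {α : Type*} [MeasurableSpace α] {μ : Measure α}
    {s : ℕ → Set α} {r : ℝ≥0∞} (hr : r < 1) (hs : ∀ k, μ (s k) ≤ r ^ k) :
    μ (limsup s atTop) = 0 := by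
  refine measure_limsup_atTop_eq_zero (ne_top_of_le_ne_top ?_ (ENNReal.tsum_le_tsum hs))
  rw [ENNReal.tsum_geometric]
  exact ENNReal.inv_ne_top.2 (tsub_pos_of_lt hr).ne'

theorem iInter_iUnion_preimage_eval_subset_limsup {ι : Type*} [Finite ι] {X : ι → Type*}
    (s : ℕ → ∀ i, Set (X i)) :
    ⋂ k, ⋃ i, Function.eval i ⁻¹' s k i ⊆
      ⋃ i, Function.eval i ⁻¹' limsup (fun k => s k i) atTop := by
  intro x hx
  simp only [mem_iInter, mem_iUnion, mem_preimage, Function.eval] at hx ⊢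
  simp only [mem_limsup_iff_frequently_mem]
  exact frequently_exists.1 (Frequently.of_forall hx)

theorem lshaped_null {n : ℕ} (X : Fin n → Type*)
    [∀ i, MeasurableSpace (X i)]
    (μ : ∀ i, Measure (X i))
    (B : Set (∀ i, X i))
    (h : ∀ ε : ℝ≥0∞, 0 < ε → ∃ Bi : ∀ i, Set (X i), (∀ i, MeasurableSet (Bi i)) ∧
      (B ⊆ ⋃ i, Function.eval i ⁻¹' Bi i) ∧ ∑ i, μ i (Bi i) ≤ ε) :
    ∃ Ni : ∀ i, Set (X i), (∀ i, MeasurableSet (Ni i)) ∧ (∀ i, μ i (Ni i) = 0) ∧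
      B ⊆ ⋃ i, Function.eval i ⁻¹' Ni i := by
  have hpos (k : ℕ) : (0 : ℝ≥0∞) < 2⁻¹ ^ k :=
    ENNReal.pow_pos (ENNReal.inv_pos.2 ENNReal.ofNat_ne_top) k
  choose Bi hmeas hcover hsum using fun k => h (2⁻¹ ^ k) (hpos k)
  refine ⟨fun i => limsup (fun k => Bi k i) atTop,
    fun i => .measurableSet_limsup fun k => hmeas k i, fun i => ?_,
    (subset_iInter hcover).trans (iInter_iUnion_preimage_eval_subset_limsup Bi)⟩
  refine measure_limsup_eq_zero_of_le_pow ENNReal.one_half_lt_one fun k => ?_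
  exact (Finset.single_le_sum_of_canonicallyOrdered (Finset.mem_univ i)).trans (hsum k)
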